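/- arXiv:2503.16621 — 2 statements merged into one kernel-verified Lean document; each statement's English description precedes it below -/
import Mathlib

section
/- Fix natural numbers n, k, a qualification function o* : Fin n → Bool, and a baseline allocation S₀ ⊆ Fin n with |S₀| = k and utility count k' = |{i ∈ S₀ : o* i = true}|. If 1 ≤ k' and k' < k, then for every individual i ∈ Fin n there exists an allocation S ⊆ Fin n with |S| = k, utility count |{j ∈ S : o* j = true}| = k', and i ∈ S. -/
/-!
An individual `i` outside the baseline `S₀` can be swapped in for a member of `S₀` with the same
qualification: this keeps both the size and the utility count. A qualified member exists because
`1 ≤ k'`, an unqualified one because `k' < k`.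
-/

namespace Finset

variable {α : Type*} [DecidableEq α] {s : Finset α} {i j : α}

theorem card_insert_erase_of_notMem (hi : i ∉ s) (hj : j ∈ s) :
    (insert i (s.erase j)).card = s.card := by
  rw [card_insert_of_notMem fun h => hi (mem_of_mem_erase h), card_erase_add_one hj]

theorem card_filter_insert_erase_of_iff (p : α → Prop) [DecidablePred p]
    (hi : i ∉ s) (hj : j ∈ s) (hij : p i ↔ p j) :
    ((insert i (s.erase j)).filter p).card = (s.filter p).card := by
  rw [filter_insert, filter_erase]
  by_cases hpi : p i
  · have hjp : j ∈ s.filter p := mem_filter.mpr ⟨hj, hij.mp hpi⟩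
    rw [if_pos hpi, card_insert_of_notMem fun h => hi (mem_filter.mp (mem_of_mem_erase h)).1,
      card_erase_add_one hjp]
  · have hjp : j ∉ s.filter p := fun h => hpi (hij.mpr (mem_filter.mp h).2)
    rw [if_neg hpi, erase_eq_of_notMem hjp]

theorem exists_card_eq_filter_card_eq_mem (p : α → Prop) [DecidablePred p]
    (hp : (s.filter p).Nonempty) (hnp : (s.filter fun a => ¬ p a).Nonempty) (i : α) :
    ∃ t : Finset α, t.card = s.card ∧ (t.filter p).card = (s.filter p).card ∧ i ∈ t := by
  by_cases hi : i ∈ s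
  · exact ⟨s, rfl, rfl, hi⟩
  obtain ⟨j, hj, hij⟩ : ∃ j ∈ s, p i ↔ p j := by
    by_cases hpi : p i
    · obtain ⟨j, hj⟩ := hp
      exact ⟨j, (mem_filter.mp hj).1, iff_of_true hpi (mem_filter.mp hj).2⟩
    · obtain ⟨j, hj⟩ := hnp
      exact ⟨j, (mem_filter.mp hj).1, iff_of_false hpi (mem_filter.mp hj).2⟩
  exact ⟨insert i (s.erase j), card_insert_erase_of_notMem hi hj,
    card_filter_insert_erase_of_iff p hi hj hij, mem_insert_self i _⟩

end Finset

/-- If `1 ≤ k'` and `k' < k`, every individual belongs to some equal-utility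
allocation. -/
theorem every_individual_in_some_equal_utility_allocation
    (n k k' : ℕ) (o : Fin n → Bool)
    (S₀ : Finset (Fin n)) (hS₀ : S₀.card = k)
    (hk' : (S₀.filter (fun i => o i = true)).card = k')
    (h1 : 1 ≤ k') (h2 : k' < k) :
    ∀ i : Fin n, ∃ S : Finset (Fin n), S.card = k ∧
      (S.filter (fun j => o j = true)).card = k' ∧ i ∈ S := by
  subst hS₀ hk'
  have hqualified : (S₀.filter fun i => o i = true).Nonempty := Finset.card_pos.mp h1
  have hunqualified : (S₀.filter fun i => ¬ o i = true).Nonempty := by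
    have := Finset.card_filter_add_card_filter_not (s := S₀) (fun i => o i = true)
    exact Finset.card_pos.mp (by omega)
  exact Finset.exists_card_eq_filter_card_eq_mem _ hqualified hunqualified
end

section
/- Fix natural numbers n, k, a qualification function o* : Fin n → Bool, and a baseline allocation S₀ ⊆ Fin n with |S₀| = k and utility count k' = |{i ∈ S₀ : o* i = true}|. If 1 ≤ k' and k' < k, then there exists a finite family of allocations, each of them a subset S ⊆ Fin n with |S| = k and utility count exactly k', such that every individual i ∈ Fin n belongs to at least one allocation in the family. -/
/-!
Every individual `i` outside the baseline `S₀` can be swapped in for a member `j` of `S₀` with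
the same qualification status: such a `j` exists because `S₀` contains both a qualified member
(`1 ≤ k'`) and an unqualified one (`k' < k`). Applying the transposition `(i j)` to `S₀` keeps
the size and the number of qualified members, and puts `i` in the allocation.
-/

namespace Finset

variable {α : Type*}

theorem exists_mem_iff_of_card_filter_pos_of_lt (s : Finset α) (p : α → Prop) [DecidablePred p]
    (hpos : 0 < #(s.filter p)) (hlt : #(s.filter p) < #s) (i : α) :
    ∃ j ∈ s, (p i ↔ p j) := by
  by_cases hi : p i
  · obtain ⟨j, hj⟩ := card_pos.mp hpos
    exact ⟨j, (mem_filter.mp hj).1, iff_of_true hi (mem_filter.mp hj).2⟩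
  · have hnot : 0 < #(s.filter fun a ↦ ¬p a) := by
      have := s.card_filter_add_card_filter_not p
      omega
    obtain ⟨j, hj⟩ := card_pos.mp hnot
    exact ⟨j, (mem_filter.mp hj).1, iff_of_false hi (mem_filter.mp hj).2⟩

variable [DecidableEq α]

theorem card_filter_map_swap {p : α → Prop} [DecidablePred p] {i j : α} (hij : p i ↔ p j)
    (s : Finset α) :
    #((s.map (Equiv.swap i j).toEmbedding).filter p) = #(s.filter p) := by
  have hswap : ∀ x, p (Equiv.swap i j x) ↔ p x := fun x ↦ by
    rcases eq_or_ne x i with rfl | hxi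
    · rw [Equiv.swap_apply_left, hij]
    rcases eq_or_ne x j with rfl | hxj
    · rw [Equiv.swap_apply_right, hij]
    · rw [Equiv.swap_apply_of_ne_of_ne hxi hxj]
  rw [filter_map, card_map]
  exact congrArg card (filter_congr fun x _ ↦ hswap x)

theorem mem_map_swap_left {i j : α} {s : Finset α} (hj : j ∈ s) :
    i ∈ s.map (Equiv.swap i j).toEmbedding := by
  rwa [mem_map_equiv, Equiv.symm_swap, Equiv.swap_apply_left]

end Finset

open Finset

/-- If `1 ≤ k'` and `k' < k`, there is a finite family of equal-utility
allocations covering every individual. -/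
theorem family_of_equal_utility_allocations_covering_everyone
    (n k k' : ℕ) (o : Fin n → Bool)
    (S₀ : Finset (Fin n)) (hS₀ : S₀.card = k)
    (hk' : (S₀.filter (fun i => o i = true)).card = k')
    (h1 : 1 ≤ k') (h2 : k' < k) :
    ∃ F : Finset (Finset (Fin n)),
      (∀ S ∈ F, S.card = k ∧ (S.filter (fun j => o j = true)).card = k') ∧
      (∀ i : Fin n, ∃ S ∈ F, i ∈ S) := by
  choose partner hpartner hsame using
    S₀.exists_mem_iff_of_card_filter_pos_of_lt (fun i ↦ o i = true) (by omega) (by omega)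
  let swapIn (i : Fin n) : Finset (Fin n) := S₀.map (Equiv.swap i (partner i)).toEmbedding
  refine ⟨univ.image swapIn, ?_, fun i ↦ ⟨swapIn i, mem_image_of_mem _ (mem_univ i), ?_⟩⟩
  · rintro S hS
    obtain ⟨i, -, rfl⟩ := mem_image.mp hS
    exact ⟨by rw [card_map, hS₀], by rw [card_filter_map_swap (hsame i), hk']⟩
  · exact mem_map_swap_left (hpartner i)
end
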